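/- For any simple graph F and any integer r ≥ |V(F)|, and for every n, ex_r(n,F) ≤ ex(n,F), where ex(n,F) is the graph Turán number of F. -/

import Mathlib

open Filter

/-- `G` contains a copy of `F` (a subgraph isomorphic to `F`). -/
def ContainsCopy {α β : Type*} (F : SimpleGraph α) (G : SimpleGraph β) : Prop :=
  ∃ f : α → β, Function.Injective f ∧ ∀ ⦃u v⦄, F.Adj u v → G.Adj (f u) (f v)

/-- The hypergraph `H` (a finite family of hyperedges) contains a Berge-`F`. -/
def IsBerge {α V : Type*} (F : SimpleGraph α) (H : Finset (Finset V)) : Prop :=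
  ∃ (ψ : α → V) (φ : Sym2 α → Finset V),
    Function.Injective ψ ∧ Set.InjOn φ F.edgeSet ∧
    (∀ e ∈ F.edgeSet, φ e ∈ H) ∧
    ∀ ⦃u v⦄, F.Adj u v → ψ u ∈ φ s(u, v) ∧ ψ v ∈ φ s(u, v)

/-- `exr r n F`: max number of hyperedges of an `r`-uniform Berge-`F`-free
hypergraph on `n` vertices. -/
noncomputable def exr {α : Type*} (r n : ℕ) (F : SimpleGraph α) : ℕ :=
  sSup {m | ∃ H : Finset (Finset (Fin n)),
    (∀ e ∈ H, e.card = r) ∧ ¬ IsBerge F H ∧ H.card = m}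

/-- A hypergraph is linear if distinct hyperedges meet in at most one vertex. -/
def LinearHypergraph {V : Type*} [DecidableEq V] (H : Finset (Finset V)) : Prop :=
  ∀ e₁ ∈ H, ∀ e₂ ∈ H, e₁ ≠ e₂ → (e₁ ∩ e₂).card ≤ 1

/-- `exrL r n F`: max number of hyperedges of an `r`-uniform linear
Berge-`F`-free hypergraph on `n` vertices. -/
noncomputable def exrL {α : Type*} (r n : ℕ) (F : SimpleGraph α) : ℕ :=
  sSup {m | ∃ H : Finset (Finset (Fin n)),
    (∀ e ∈ H, e.card = r) ∧ LinearHypergraph H ∧ ¬ IsBerge F H ∧ H.card = m}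

/-- The Ramsey number of `F` and `G`. -/
noncomputable def ramsey {α β : Type*} (F : SimpleGraph α) (G : SimpleGraph β) : ℕ :=
  sInf {N | ∀ C : SimpleGraph (Fin N), ContainsCopy F C ∨ ContainsCopy G Cᶜ}

/-- The 2-shadow of a hypergraph. -/
def shadow {V : Type*} (H : Finset (Finset V)) : SimpleGraph V where
  Adj u v := u ≠ v ∧ ∃ e ∈ H, u ∈ e ∧ v ∈ e
  symm := ⟨by rintro u v ⟨h, e, he, hu, hv⟩; exact ⟨h.symm, e, he, hv, hu⟩⟩
  loopless := ⟨fun u h => h.1 rfl⟩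

/-- The graph Turán number `ex(n,F)`. -/
noncomputable def exGraph {α : Type*} (n : ℕ) (F : SimpleGraph α) : ℕ :=
  sSup {m | ∃ G : SimpleGraph (Fin n), ¬ ContainsCopy F G ∧ G.edgeSet.ncard = m}

/-- `ex(n, K_r, F)`: max number of `r`-cliques in an `F`-free graph on `n` vertices. -/
noncomputable def exClique {α : Type*} (n r : ℕ) (F : SimpleGraph α) : ℕ :=
  sSup {m | ∃ G : SimpleGraph (Fin n), ¬ ContainsCopy F G ∧
    {s : Finset (Fin n) | G.IsNClique r s}.ncard = m}

/-- A `t`-admissible partition of the vertices of `F`: parts have size at most `t`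
and between any two distinct parts there is at most one edge of `F`. -/
def IsAdmissible {α : Type*} [Fintype α] [DecidableEq α] (t : ℕ) (F : SimpleGraph α)
    (P : Finpartition (Finset.univ : Finset α)) : Prop :=
  (∀ A ∈ P.parts, A.card ≤ t) ∧
  ∀ A ∈ P.parts, ∀ B ∈ P.parts, A ≠ B →
    {p : α × α | p.1 ∈ A ∧ p.2 ∈ B ∧ F.Adj p.1 p.2}.ncard ≤ 1

/-- The graph obtained from `F` by contracting each part of the partition `P`. -/
def contractGraph {α : Type*} [Fintype α] [DecidableEq α] (F : SimpleGraph α)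
    (P : Finpartition (Finset.univ : Finset α)) : SimpleGraph {A // A ∈ P.parts} where
  Adj A B := A ≠ B ∧ ∃ v ∈ (A : Finset α), ∃ w ∈ (B : Finset α), F.Adj v w
  symm := by
    refine ⟨?_⟩
    rintro A B ⟨hne, v, hv, w, hw, hadj⟩
    exact ⟨hne.symm, w, hw, v, hv, hadj.symm⟩
  loopless := ⟨by rintro A ⟨hne, -⟩; exact hne rfl⟩



section Aux

open Finset Function

/-- Berge containment is monotone in the hypergraph. -/
lemma IsBerge.mono {α V : Type*} {F : SimpleGraph α} {H H' : Finset (Finset V)}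
    (h : IsBerge F H') (hsub : H' ⊆ H) : IsBerge F H := by
  obtain ⟨ψ, φ, h1, h2, h3, h4⟩ := h
  exact ⟨ψ, φ, h1, h2, fun e he => hsub (h3 e he), h4⟩

/-- If each hyperedge has a distinct selected 2-subset and there is an injection `f`
realizing every edge of `F` as a selected pair, then `H` contains a Berge-`F`. -/
lemma berge_of_sel {α : Type*} (F : SimpleGraph α) {n : ℕ} {H : Finset (Finset (Fin n))}
    {sel : Finset (Fin n) → Finset (Fin n)} (hinj : Set.InjOn sel ↑H)
    (hsub : ∀ e ∈ H, sel e ⊆ e)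
    {f : α → Fin n} (hf : Function.Injective f)
    (hadj : ∀ ⦃u v⦄, F.Adj u v → ∃ e ∈ H, sel e = {f u, f v}) :
    IsBerge F H := by
  classical
  set τ : Sym2 α → Finset (Fin n) :=
    Sym2.lift ⟨fun u v => ({f u, f v} : Finset (Fin n)),
      fun u v => Finset.pair_comm _ _⟩ with hτ
  have key : ∀ p ∈ F.edgeSet, ∃ e ∈ (↑H : Set (Finset (Fin n))), sel e = τ p := by
    intro p hp
    induction p using Sym2.ind with
    | _ u v =>
      obtain ⟨e, he, hsel⟩ := hadj hp
      exact ⟨e, he, by simp [hτ, Sym2.lift_mk, hsel]⟩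
  have τinj : ∀ p ∈ F.edgeSet, ∀ q ∈ F.edgeSet, τ p = τ q → p = q := by
    intro p hp q hq h
    induction p using Sym2.ind with
    | _ u v =>
      induction q using Sym2.ind with
      | _ x y =>
        simp only [hτ, Sym2.lift_mk] at h
        have h' : ({f u, f v} : Set (Fin n)) = {f x, f y} := by
          have := congrArg (fun s : Finset (Fin n) => (s : Set (Fin n))) h
          simpa using this
        rcases Set.pair_eq_pair_iff.mp h' with ⟨h1, h2⟩ | ⟨h1, h2⟩
        · rw [Sym2.eq_iff]; exact Or.inl ⟨hf h1, hf h2⟩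
        · rw [Sym2.eq_iff]; exact Or.inr ⟨hf h1, hf h2⟩
  refine ⟨f, fun p => Function.invFunOn sel ↑H (τ p), hf, ?_, ?_, ?_⟩
  · intro p hp q hq h
    dsimp only at h
    have h1 := Function.invFunOn_eq (key p hp)
    rw [h, Function.invFunOn_eq (key q hq)] at h1
    exact τinj p hp q hq h1.symm
  · intro e he
    exact Function.invFunOn_mem (key e he)
  · intro u v huv
    have hp : s(u, v) ∈ F.edgeSet := huv
    have hmem : Function.invFunOn sel ↑H (τ s(u, v)) ∈ H := Function.invFunOn_mem (key _ hp)
    have heq : sel (Function.invFunOn sel ↑H (τ s(u, v))) = τ s(u, v) :=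
      Function.invFunOn_eq (key _ hp)
    have hτe : τ s(u, v) = {f u, f v} := by simp [hτ, Sym2.lift_mk]
    have hsub' := hsub _ hmem
    rw [heq, hτe] at hsub'
    constructor
    · exact hsub' (Finset.mem_insert_self _ _)
    · exact hsub' (Finset.mem_insert_of_mem (Finset.mem_singleton_self _))

/-- Key lemma: a Berge-`F`-free `r`-uniform hypergraph with `r ≥ |V(F)|` admits a
system of distinct 2-subset representatives. -/
lemma exists_sel {α : Type*} [Fintype α] (F : SimpleGraph α) {r n : ℕ}
    (hr : Fintype.card α ≤ r) :
    ∀ H : Finset (Finset (Fin n)), (∀ e ∈ H, e.card = r) → ¬ IsBerge F H →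
      ∃ sel : Finset (Fin n) → Finset (Fin n),
        Set.InjOn sel ↑H ∧ ∀ e ∈ H, (sel e).card = 2 ∧ sel e ⊆ e := by
  classical
  intro H
  induction H using Finset.induction_on with
  | empty => exact fun _ _ => ⟨fun _ => ∅, by simp [Set.InjOn], by simp⟩
  | @insert a s ha ih =>
    intro huni hB
    obtain ⟨sel, hinj, hsel⟩ :=
      ih (fun e he => huni e (Finset.mem_insert_of_mem he))
        (fun hb => hB (hb.mono (Finset.subset_insert a s)))
    by_cases hfresh : ∃ p ∈ Finset.powersetCard 2 a, p ∉ s.image sel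
    · obtain ⟨p, hpP, hpu⟩ := hfresh
      obtain ⟨hpa, hpc⟩ := Finset.mem_powersetCard.mp hpP
      refine ⟨Function.update sel a p, ?_, ?_⟩
      · intro x hx y hy hxy
        simp only [Finset.coe_insert, Set.mem_insert_iff, Finset.mem_coe] at hx hy
        rcases hx with rfl | hx <;> rcases hy with rfl | hy
        · rfl
        · exfalso; apply hpu
          rw [Function.update_self, Function.update_of_ne (ne_of_mem_of_not_mem hy ha) _ _] at hxy
          exact Finset.mem_image.mpr ⟨y, hy, hxy.symm⟩
        · exfalso; apply hpu
          rw [Function.update_self, Function.update_of_ne (ne_of_mem_of_not_mem hx ha) _ _] at hxy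
          exact Finset.mem_image.mpr ⟨x, hx, hxy⟩
        · rw [Function.update_of_ne (ne_of_mem_of_not_mem hx ha) _ _,
            Function.update_of_ne (ne_of_mem_of_not_mem hy ha) _ _] at hxy
          exact hinj hx hy hxy
      · intro e he
        rcases Finset.mem_insert.mp he with rfl | he
        · rw [Function.update_self]; exact ⟨hpc, hpa⟩
        · rw [Function.update_of_ne (ne_of_mem_of_not_mem he ha) _ _]
          exact hsel e he
    · exfalso
      push_neg at hfresh
      have hacard : a.card = r := huni a (Finset.mem_insert_self a s)
      have hcard : Fintype.card α ≤ Fintype.card {x // x ∈ a} := by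
        rw [Fintype.card_coe, hacard]; exact hr
      obtain ⟨g⟩ := Function.Embedding.nonempty_of_card_le hcard
      set f : α → Fin n := fun u => (g u : Fin n) with hfdef
      have hfinj : Function.Injective f := fun u v h => g.injective (Subtype.ext h)
      have hadj : ∀ ⦃u v⦄, F.Adj u v → ∃ e ∈ s, sel e = {f u, f v} := by
        intro u v huv
        have hne : f u ≠ f v := fun h => huv.ne (hfinj h)
        have hmem : ({f u, f v} : Finset (Fin n)) ∈ Finset.powersetCard 2 a := by
          refine Finset.mem_powersetCard.mpr ⟨?_, Finset.card_pair hne⟩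
          intro x hx
          rcases Finset.mem_insert.mp hx with rfl | hx
          · exact (g u).2
          · rw [Finset.mem_singleton.mp hx]; exact (g v).2
        obtain ⟨e, he, hse⟩ := Finset.mem_image.mp (hfresh _ hmem)
        exact ⟨e, he, hse⟩
      exact hB ((berge_of_sel F hinj (fun e he => (hsel e he).2) hfinj hadj).mono
        (Finset.subset_insert a s))

end Aux

/-- For `r ≥ |V(F)|` and every `n`, `ex_r(n,F) ≤ ex(n,F)`. -/
theorem stmt6 {α : Type*} [Fintype α] (F : SimpleGraph α)
    (r : ℕ) (hr : Fintype.card α ≤ r) (n : ℕ) :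
    exr r n F ≤ exGraph n F := by
  classical
  rw [exr]
  refine csSup_le' ?_
  rintro m ⟨H, huni, hB, rfl⟩
  obtain ⟨sel, hinj, hsel⟩ := exists_sel F hr H huni hB
  set G : SimpleGraph (Fin n) :=
    { Adj := fun u v => u ≠ v ∧ ∃ e ∈ H, sel e = {u, v}
      symm := ⟨by
        rintro u v ⟨hne, e, he, hse⟩
        exact ⟨hne.symm, e, he, by rw [hse, Finset.pair_comm]⟩⟩
      loopless := ⟨fun u h => h.1 rfl⟩ } with hG
  have hno : ¬ ContainsCopy F G := by
    rintro ⟨f, hf, hadj⟩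
    exact hB (berge_of_sel F hinj (fun e he => (hsel e he).2) hf
      (fun u v huv => (hadj huv).2))
  have hcard : H.card ≤ G.edgeSet.ncard := by
    set τ : Sym2 (Fin n) → Finset (Fin n) :=
      Sym2.lift ⟨fun a b => ({a, b} : Finset (Fin n)), fun a b => Finset.pair_comm a b⟩ with hτ
    have h1 : (sel '' ↑H) ⊆ τ '' G.edgeSet := by
      rintro q ⟨e, he, rfl⟩
      have he' : e ∈ H := he
      obtain ⟨x, y, hxy, hxyeq⟩ := Finset.card_eq_two.mp (hsel e he').1
      refine ⟨s(x, y), ?_, by simp [hτ, Sym2.lift_mk, hxyeq]⟩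
      exact G.mem_edgeSet.mpr ⟨hxy, e, he', hxyeq⟩
    calc H.card = (sel '' ↑H).ncard := by
            rw [Set.ncard_image_of_injOn hinj, Set.ncard_coe_finset]
      _ ≤ (τ '' G.edgeSet).ncard := Set.ncard_le_ncard h1 (Set.toFinite _)
      _ ≤ G.edgeSet.ncard := Set.ncard_image_le (Set.toFinite _)
  have hbdd : BddAbove {m | ∃ G' : SimpleGraph (Fin n),
      ¬ ContainsCopy F G' ∧ G'.edgeSet.ncard = m} := by
    refine ⟨Nat.card (Sym2 (Fin n)), ?_⟩
    rintro m ⟨G', _, rfl⟩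
    calc G'.edgeSet.ncard ≤ (Set.univ : Set (Sym2 (Fin n))).ncard :=
          Set.ncard_le_ncard (Set.subset_univ _) (Set.toFinite _)
      _ = Nat.card (Sym2 (Fin n)) := Set.ncard_univ _
  have hmem : G.edgeSet.ncard ∈ {m | ∃ G' : SimpleGraph (Fin n),
      ¬ ContainsCopy F G' ∧ G'.edgeSet.ncard = m} := ⟨G, hno, rfl⟩
  rw [exGraph]
  exact hcard.trans (le_csSup hbdd hmem)
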